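/- Let S be a ditopological Clifford semigroup whose maximal semilattice E is a U-semilattice, and let A be a countable U-dense subset of E. Then S is metrizable by a subinvariant metric (a metric d generating the topology of S with max{d(zx,zy), d(xz,yz)} ≤ d(x,y) = d(x⁻¹,y⁻¹) for all x,y,z ∈ S) if and only if E is metrizable by a subinvariant metric and every maximal subgroup H_e, e ∈ A, is first countable and balanced. -/

import Mathlib

/-!
The forward implication is soft: `d` restricts to `E`, and a `d`-ball around `e` in `H_e` is
invariant under conjugation because `d (x v x⁻¹) e = d (x v x⁻¹) (x e x⁻¹) ≤ d v e`.

For the converse, each `H_e` with `e ∈ A` has a countable base of symmetric neighbourhoods `V_e m`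
invariant under conjugation by `H_e`, with `V_e (m + 1) ^ 3 ⊆ V_e m`. Let `h_e x` be the truncated
`ρ`-distance from `π x` to the complement of the interior of the cone `↑e`. Call `x` and `y` close
at level `m` for `e` if `ρ (π x) (π y) < 4⁻ᵐ` and, whenever `h_e x` and `h_e y` exceed `4⁻ᵐ`,
`(e x) (e y)⁻¹ ∈ V_e m`. Where `h_e > 0` we have `e ≤ π x`, so `x ↦ e x` is multiplicative there;
as `h_e` is `1`-Lipschitz and decreases under multiplication, these relations are preserved by
translations and inversion, and three steps at level `m + 1` give one at level `m`. Intersecting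
them over the first `k` points of `A` yields entourages forming neighbourhood bases (this is where
ditopologicity and U-density enter), and the metric they induce as in the metrization theorem for
uniform spaces inherits the invariance.
-/

open Topology TopologicalSpace

/-- `S`, together with the inversion `⁻¹`, is a topological Clifford semigroup:
a Hausdorff topological semigroup in which every `x` has a unique inverse `x⁻¹`
(`x*x⁻¹*x = x`, `x⁻¹*x*x⁻¹ = x⁻¹`) commuting with `x`, the inversion being
continuous. -/
def IsTopologicalCliffordSemigroup (S : Type u) [Semigroup S] [TopologicalSpace S]
    [Inv S] : Prop :=
  T2Space S ∧ ContinuousMul S ∧ Continuous (fun x : S => x⁻¹) ∧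
  (∀ x : S, x * x⁻¹ * x = x ∧ x⁻¹ * x * x⁻¹ = x⁻¹ ∧ x * x⁻¹ = x⁻¹ * x) ∧
  (∀ x y : S, x * y * x = x → y * x * y = y → y = x⁻¹)

/-- The set of idempotents (the maximal semilattice) of a semigroup `S`. -/
def idempotents (S : Type u) [Mul S] : Set S := {x : S | x * x = x}

/-- The projection of a Clifford semigroup onto its maximal semilattice,
`π(x) = x * x⁻¹`. -/
def cliffordProj {S : Type u} [Mul S] [Inv S] (x : S) : S := x * x⁻¹

/-- The maximal semilattice `E` of `S` (with its subspace topology) is a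
*U-semilattice*: for every open `U ⊆ E` and every `x ∈ U` there is `y ∈ U` with
`y ≪ x`, i.e. `x` belongs to the interior (in `E`) of the upper cone
`↑y = {f ∈ E : y * f = y}` of `y`. -/
def IdempotentsAreUSemilattice (S : Type u) [Semigroup S] [TopologicalSpace S] : Prop :=
  ∀ U : Set ↥(idempotents S), IsOpen U → ∀ x ∈ U,
    ∃ y ∈ U, x ∈ interior {f : ↥(idempotents S) | (y : S) * (f : S) = (y : S)}

/-- A subset `A` of the maximal semilattice `E` of `S` is *U-dense* in `E` if for every
`x ∈ E` and every neighborhood `O` of `x` in `E` there is `e ∈ O ∩ A` with `e ≪ x`. -/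
def IsUDenseInIdempotents (S : Type u) [Semigroup S] [TopologicalSpace S]
    (A : Set S) : Prop :=
  ∀ x : ↥(idempotents S), ∀ O ∈ nhds x,
    ∃ e : ↥(idempotents S), (e : S) ∈ A ∧ e ∈ O ∧
      x ∈ interior {f : ↥(idempotents S) | (e : S) * (f : S) = (e : S)}

/-- A topological Clifford semigroup `S` is *ditopological* if for every `x ∈ S` and
every neighborhood `O` of `x` there are a neighborhood `U` of `x` in `S` and a
neighborhood `W ⊆ E` of `π(x)` in the subspace topology of the maximal semilattice `E`
such that `(U ÷ W) ∩ π⁻¹(W) ⊆ O`, where `U ÷ W = {z : ∃ b ∈ U, ∃ a ∈ W, b = z * a}`. -/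
def Ditopological (S : Type u) [Semigroup S] [TopologicalSpace S] [Inv S] : Prop :=
  ∀ x : S, ∀ O ∈ nhds x, ∃ U ∈ nhds x, ∃ W : Set S,
    W ⊆ idempotents S ∧ W ∈ nhdsWithin (cliffordProj x) (idempotents S) ∧
    {z : S | ∃ b ∈ U, ∃ a ∈ W, b = z * a} ∩ cliffordProj ⁻¹' W ⊆ O

/-- `d` is a metric on `X` generating its topology. -/
def IsCompatibleMetric {X : Type u} [TopologicalSpace X] (d : X → X → ℝ) : Prop :=
  (∀ x y : X, d x y = 0 ↔ x = y) ∧ (∀ x y : X, d x y = d y x) ∧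
  (∀ x y z : X, d x z ≤ d x y + d y z) ∧
  (∀ s : Set X, IsOpen s ↔ ∀ x ∈ s, ∃ ε > 0, {y : X | d x y < ε} ⊆ s)

/-- The maximal subgroup `H_e = π⁻¹(e)` of `S` (a topological group with identity `e`,
in the subspace topology) is *balanced*: every neighborhood `U` of the identity `e`
in `H_e` contains a neighborhood `V` of `e` with `x V x⁻¹ = V` for all `x ∈ H_e`. -/
def IsBalancedMaximalSubgroup (S : Type u) [Semigroup S] [TopologicalSpace S] [Inv S]
    (e : S) : Prop :=
  ∀ U : Set S, U ⊆ cliffordProj ⁻¹' {e} → U ∈ nhdsWithin e (cliffordProj ⁻¹' {e}) →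
    ∃ V : Set S, V ⊆ U ∧ V ∈ nhdsWithin e (cliffordProj ⁻¹' {e}) ∧
      ∀ x ∈ cliffordProj ⁻¹' {e}, (fun v : S => x * v * x⁻¹) '' V = V

open Filter
open scoped NNReal

namespace IsCompatibleMetric

variable {X : Type*} [TopologicalSpace X] {d : X → X → ℝ}

theorem dist_self (hd : IsCompatibleMetric d) (x : X) : d x x = 0 := (hd.1 x x).2 rfl

theorem dist_comm (hd : IsCompatibleMetric d) (x y : X) : d x y = d y x := hd.2.1 x y

theorem dist_triangle (hd : IsCompatibleMetric d) (x y z : X) : d x z ≤ d x y + d y z :=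
  hd.2.2.1 x y z

theorem nonneg (hd : IsCompatibleMetric d) (x y : X) : 0 ≤ d x y := by
  have := hd.dist_triangle x y x
  rw [hd.dist_self, hd.dist_comm y x] at this
  linarith

theorem isOpen_ball (hd : IsCompatibleMetric d) (x : X) (ε : ℝ) : IsOpen {y | d x y < ε} :=
  (hd.2.2.2 _).2 fun y hy => ⟨ε - d x y, sub_pos.2 hy, fun z hz => by
    have := hd.dist_triangle x y z
    have hz : d y z < ε - d x y := hz
    show d x z < ε
    linarith⟩

theorem nhds_basis (hd : IsCompatibleMetric d) (x : X) :
    (𝓝 x).HasBasis (fun ε : ℝ => 0 < ε) fun ε => {y | d x y < ε} := by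
  refine ⟨fun t => ⟨fun ht => ?_, fun ⟨ε, hε, hsub⟩ => ?_⟩⟩
  · obtain ⟨u, hut, hu, hxu⟩ := mem_nhds_iff.1 ht
    obtain ⟨ε, hε, hsub⟩ := (hd.2.2.2 u).1 hu x hxu
    exact ⟨ε, hε, hsub.trans hut⟩
  · exact mem_of_superset ((hd.isOpen_ball x ε).mem_nhds (by simpa [hd.dist_self])) hsub

theorem of_nhds_basis (h0 : ∀ x y, d x y = 0 ↔ x = y) (hsymm : ∀ x y, d x y = d y x)
    (htri : ∀ x y z, d x z ≤ d x y + d y z)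
    (hbasis : ∀ x, (𝓝 x).HasBasis (fun ε : ℝ => 0 < ε) fun ε => {y | d x y < ε}) :
    IsCompatibleMetric d :=
  ⟨h0, hsymm, htri, fun _ => isOpen_iff_mem_nhds.trans <| forall₂_congr fun x _ =>
    (hbasis x).mem_iff⟩

theorem subtype (hd : IsCompatibleMetric d) (s : Set X) :
    IsCompatibleMetric fun a b : s => d a b :=
  of_nhds_basis (fun a b => (hd.1 a b).trans Subtype.ext_iff.symm)
    (fun a b => hd.dist_comm a b) (fun a b c => hd.dist_triangle a b c) fun a => by
      rw [nhds_subtype]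
      exact (hd.nhds_basis a).comap _

theorem firstCountableTopology (hd : IsCompatibleMetric d) : FirstCountableTopology X :=
  ⟨fun x => ((hd.nhds_basis x).to_hasBasis (p' := fun _ : ℕ => True)
    (fun _ hε => (exists_nat_one_div_lt hε).imp fun _ hn => ⟨trivial, fun _ hy => hy.trans hn⟩)
    fun n _ => ⟨1 / (n + 1), Nat.one_div_pos_of_nat, subset_rfl⟩).isCountablyGenerated⟩

end IsCompatibleMetric

section Depth

variable {X : Type*} [TopologicalSpace X] {d : X → X → ℝ} {s : Set X}

/-- Inserting `1` truncates the distance to `sᶜ` and avoids the junk value `sInf ∅ = 0`. -/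
noncomputable def depth (d : X → X → ℝ) (s : Set X) (x : X) : ℝ :=
  sInf (insert 1 (d x '' sᶜ))

theorem depth_le_one (hd : IsCompatibleMetric d) (x : X) : depth d s x ≤ 1 :=
  csInf_le ⟨0, by rintro _ (rfl | ⟨k, -, rfl⟩); exacts [zero_le_one, hd.nonneg x k]⟩
    (Set.mem_insert _ _)

theorem depth_le_dist (hd : IsCompatibleMetric d) {x k : X} (hk : k ∉ s) : depth d s x ≤ d x k :=
  csInf_le ⟨0, by rintro _ (rfl | ⟨k, -, rfl⟩); exacts [zero_le_one, hd.nonneg x k]⟩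
    (Set.mem_insert_of_mem _ ⟨k, hk, rfl⟩)

theorem depth_le_add (hd : IsCompatibleMetric d) (x y : X) :
    depth d s x ≤ depth d s y + d x y := by
  rw [← sub_le_iff_le_add]
  refine le_csInf (Set.insert_nonempty _ _) ?_
  rintro _ (rfl | ⟨k, hk, rfl⟩)
  · linarith [depth_le_one (s := s) hd x, hd.nonneg x y]
  · linarith [depth_le_dist hd (x := x) hk, hd.dist_triangle x y k]

theorem depth_pos (hd : IsCompatibleMetric d) (hs : IsOpen s) {x : X} (hx : x ∈ s) :
    0 < depth d s x := by
  obtain ⟨ε, hε, hball⟩ := (hd.nhds_basis x).mem_iff.1 (hs.mem_nhds hx)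
  refine (lt_min one_pos hε).trans_le (le_csInf (Set.insert_nonempty _ _) ?_)
  rintro _ (rfl | ⟨k, hk, rfl⟩)
  · exact min_le_left _ _
  · exact (min_le_right _ _).trans (not_lt.1 fun h => hk (hball h))

theorem mem_of_depth_pos (hd : IsCompatibleMetric d) {x : X} (h : 0 < depth d s x) : x ∈ s := by
  by_contra hx
  have := depth_le_dist hd (x := x) hx
  rw [hd.dist_self] at this
  exact this.not_gt h

theorem depth_le_depth (hd : IsCompatibleMetric d) {x y : X}
    (h : ∀ k ∉ s, ∃ k' ∉ s, d y k' ≤ d x k) : depth d s y ≤ depth d s x := by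
  refine le_csInf (Set.insert_nonempty _ _) ?_
  rintro _ (rfl | ⟨k, hk, rfl⟩)
  · exact depth_le_one hd y
  · obtain ⟨k', hk', hle⟩ := h k hk
    exact (depth_le_dist hd hk').trans hle

end Depth

/- The metric is built from the entourages as in `UniformSpace.metrizable_uniformity`; the
construction is repeated because we need that maps preserving every `U n` are `1`-Lipschitz. -/
section ChainMetric

open scoped Classical

variable {X : Type*} {U : ℕ → Set (X × X)}

variable (U) in
noncomputable def levelDist (x y : X) : ℝ≥0 :=
  if h : ∃ n, (x, y) ∉ U n then 2⁻¹ ^ Nat.find h else 0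

theorem levelDist_le_levelDist {x y x' y' : X} (h : ∀ n, (x', y') ∈ U n → (x, y) ∈ U n) :
    levelDist U x y ≤ levelDist U x' y' := by
  unfold levelDist
  split_ifs with h₁ h₂ h₂
  · exact pow_le_pow_of_le_one (by norm_num) (by norm_num)
      (Nat.find_mono fun n hn hn' => hn (h n hn'))
  · push Not at h₂
    exact absurd (h _ (h₂ _)) (Nat.find_spec h₁)
  · exact zero_le
  · exact le_rfl

theorem levelDist_lt_iff (hU : Antitone U) {x y : X} {n : ℕ} :
    (levelDist U x y : ℝ) < 2⁻¹ ^ n ↔ (x, y) ∈ U n := by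
  unfold levelDist
  split_ifs with h
  · push_cast
    rw [pow_lt_pow_iff_right_of_lt_one₀ (by norm_num) (by norm_num), Nat.lt_find_iff]
    exact ⟨fun hle => not_not.1 (hle n le_rfl), fun hn m hm => not_not.2 (hU hm hn)⟩
  · push Not at h
    simp [h n]

theorem levelDist_self (hrefl : ∀ n x, (x, x) ∈ U n) (x : X) : levelDist U x x = 0 :=
  dif_neg (by simpa using fun n => hrefl n x)

theorem levelDist_comm (hsymm : ∀ n x y, (x, y) ∈ U n → (y, x) ∈ U n) (x y : X) :
    levelDist U x y = levelDist U y x :=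
  le_antisymm (levelDist_le_levelDist fun n => hsymm n y x)
    (levelDist_le_levelDist fun n => hsymm n x y)

theorem levelDist_le_two_mul_max (hU : Antitone U)
    (hcomp : ∀ n x y z w, (x, y) ∈ U (n + 1) → (y, z) ∈ U (n + 1) → (z, w) ∈ U (n + 1) →
      (x, w) ∈ U n) (x₁ x₂ x₃ x₄ : X) :
    levelDist U x₁ x₄ ≤
      2 * max (levelDist U x₁ x₂) (max (levelDist U x₂ x₃) (levelDist U x₃ x₄)) := by
  set M := max (levelDist U x₁ x₂) (max (levelDist U x₂ x₃) (levelDist U x₃ x₄))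
  by_cases H : ∃ n, (x₁, x₄) ∉ U n
  · rw [levelDist, dif_pos H]
    by_contra! hlt
    have hM : (M : ℝ) < 2⁻¹ ^ (Nat.find H + 1) := by
      have := NNReal.coe_lt_coe.2 hlt
      push_cast at this
      rw [pow_succ]
      linarith
    have hmem : ∀ a b, levelDist U a b ≤ M → (a, b) ∈ U (Nat.find H + 1) := fun a b hab =>
      (levelDist_lt_iff hU).1 ((NNReal.coe_le_coe.2 hab).trans_lt hM)
    exact Nat.find_spec H (hcomp _ _ _ _ _ (hmem _ _ (le_max_left _ _))
      (hmem _ _ ((le_max_left _ _).trans (le_max_right _ _)))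
      (hmem _ _ ((le_max_right _ _).trans (le_max_right _ _))))
  · rw [levelDist, dif_neg H]
    exact zero_le

end ChainMetric

theorem PseudoMetricSpace.dist_ofPreNNDist_map_le {X : Type*} (d : X → X → ℝ≥0)
    (dist_self : ∀ x, d x x = 0) (dist_comm : ∀ x y, d x y = d y x) {θ : X → X}
    (hθ : ∀ x y, d (θ x) (θ y) ≤ d x y) (x y : X) :
    @dist X (@PseudoMetricSpace.toDist X (.ofPreNNDist d dist_self dist_comm)) (θ x) (θ y) ≤
      @dist X (@PseudoMetricSpace.toDist X (.ofPreNNDist d dist_self dist_comm)) x y := by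
  rw [dist_ofPreNNDist, dist_ofPreNNDist, NNReal.coe_le_coe]
  refine le_ciInf fun l => (ciInf_le (OrderBot.bddBelow _) (l.map θ)).trans ?_
  rw [← List.map_cons, ← List.map_singleton (f := θ) (a := y), ← List.map_append, List.zipWith_map,
    ← List.map_uncurry_zip_eq_zipWith, ← List.map_uncurry_zip_eq_zipWith]
  exact List.sum_le_sum fun p _ => hθ p.1 p.2

theorem exists_isCompatibleMetric_of_nhds_basis {X : Type*} [TopologicalSpace X] [T1Space X]
    {U : ℕ → Set (X × X)} (hrefl : ∀ n x, (x, x) ∈ U n)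
    (hsymm : ∀ n x y, (x, y) ∈ U n → (y, x) ∈ U n)
    (hcomp : ∀ n x y z w, (x, y) ∈ U (n + 1) → (y, z) ∈ U (n + 1) → (z, w) ∈ U (n + 1) →
      (x, w) ∈ U n)
    (hbasis : ∀ x, (𝓝 x).HasBasis (fun _ : ℕ => True) fun n => {y | (x, y) ∈ U n}) :
    ∃ d : X → X → ℝ, IsCompatibleMetric d ∧
      ∀ θ : X → X, (∀ n x y, (x, y) ∈ U n → (θ x, θ y) ∈ U n) → ∀ x y, d (θ x) (θ y) ≤ d x y := by
  have hU : Antitone U := antitone_nat_of_succ_le fun n p hp =>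
    hcomp n p.1 p.1 p.2 p.2 (hrefl _ _) hp (hrefl _ _)
  let I := PseudoMetricSpace.ofPreNNDist (levelDist U) (levelDist_self hrefl) (levelDist_comm hsymm)
  let d : X → X → ℝ := @dist X I.toDist
  have hle : ∀ x y, d x y ≤ levelDist U x y := PseudoMetricSpace.dist_ofPreNNDist_le _ _ _
  have hge : ∀ x y, (levelDist U x y : ℝ) ≤ 2 * d x y :=
    PseudoMetricSpace.le_two_mul_dist_ofPreNNDist _ _ _ (levelDist_le_two_mul_max hU hcomp)
  have hball : ∀ x, (𝓝 x).HasBasis (fun ε : ℝ => 0 < ε) fun ε => {y | d x y < ε} := by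
    refine fun x => (hbasis x).to_hasBasis (fun n _ => ⟨2⁻¹ ^ (n + 1), by positivity,
      fun y hy => (levelDist_lt_iff hU).1 ?_⟩) fun ε hε => ?_
    · have : d x y < 2⁻¹ ^ (n + 1) := hy
      rw [pow_succ] at this
      linarith [hge x y]
    · obtain ⟨n, hn⟩ := exists_pow_lt_of_lt_one hε (by norm_num : (2⁻¹ : ℝ) < 1)
      exact ⟨n, trivial, fun y hy => (hle x y).trans_lt (((levelDist_lt_iff hU).2 hy).trans hn)⟩
  refine ⟨d, .of_nhds_basis (fun x y => ⟨fun h => ?_, fun h => h ▸ @dist_self X I x⟩)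
    (@dist_comm X I) (@dist_triangle X I) hball, fun θ hθ => ?_⟩
  · by_contra hxy
    obtain ⟨ε, hε, hsub⟩ := (hball x).mem_iff.1 (compl_singleton_mem_nhds hxy)
    exact hsub (show d x y < ε by rw [h]; exact hε) rfl
  · exact PseudoMetricSpace.dist_ofPreNNDist_map_le _ _ _ fun x y =>
      levelDist_le_levelDist fun n => hθ n x y

theorem exists_mul_mul_subset {S : Type*} [Semigroup S] [TopologicalSpace S] [ContinuousMul S]
    {H : Set S} (hH : ∀ a ∈ H, ∀ b ∈ H, a * b ∈ H) {e : S} (he : IsIdempotentElem e)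
    {M : Set S} (hM : M ∈ 𝓝[H] e) :
    ∃ N ∈ 𝓝[H] e, ∀ a ∈ N, ∀ b ∈ N, ∀ c ∈ N, a * b * c ∈ M := by
  have hmul : ∀ M ∈ 𝓝[H] e, ∃ N ∈ 𝓝[H] e, ∀ a ∈ N, ∀ b ∈ N, a * b ∈ M := by
    intro M hM
    have : Tendsto (fun p : S × S => p.1 * p.2) (𝓝[H] e ×ˢ 𝓝[H] e) (𝓝[H] e) := by
      refine tendsto_nhdsWithin_iff.2 ⟨?_, ?_⟩
      · exact (continuous_mul.tendsto' (e, e) e he.eq).mono_left <|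
          (Filter.prod_mono nhdsWithin_le_nhds nhdsWithin_le_nhds).trans nhds_prod_eq.ge
      · exact mem_of_superset (prod_mem_prod self_mem_nhdsWithin self_mem_nhdsWithin)
          fun p hp => hH _ hp.1 _ hp.2
    exact eventually_prod_self_iff.1 (this.eventually hM)
  obtain ⟨N₁, hN₁, hN₁M⟩ := hmul M hM
  obtain ⟨N₂, hN₂, hN₂N₁⟩ := hmul N₁ hN₁
  exact ⟨N₁ ∩ N₂, inter_mem hN₁ hN₂, fun a ha b hb c hc =>
    hN₁M _ (hN₂N₁ a ha.2 b hb.2) c hc.1⟩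

class IsCliffordSemigroup (S : Type*) [Semigroup S] [Inv S] : Prop where
  mul_inv_mul (x : S) : x * x⁻¹ * x = x
  inv_mul_inv (x : S) : x⁻¹ * x * x⁻¹ = x⁻¹
  mul_inv_comm (x : S) : x * x⁻¹ = x⁻¹ * x
  eq_inv_of_mul_mul (x y : S) : x * y * x = x → y * x * y = y → y = x⁻¹

namespace IsCliffordSemigroup

variable {S : Type*} [Semigroup S] [Inv S] [IsCliffordSemigroup S] {e f : S}

theorem inv_inv (x : S) : x⁻¹⁻¹ = x :=
  (eq_inv_of_mul_mul x⁻¹ x (inv_mul_inv x) (mul_inv_mul x)).symm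

theorem inv_eq_self (he : IsIdempotentElem e) : e⁻¹ = e :=
  (eq_inv_of_mul_mul e e (by rw [he.eq, he.eq]) (by rw [he.eq, he.eq])).symm

theorem isIdempotentElem_cliffordProj (x : S) : IsIdempotentElem (cliffordProj x) := by
  rw [IsIdempotentElem, cliffordProj, ← mul_assoc, mul_inv_mul]

theorem isIdempotentElem_inv_mul (x : S) : IsIdempotentElem (x⁻¹ * x) :=
  mul_inv_comm x ▸ isIdempotentElem_cliffordProj x

theorem isIdempotentElem_mul (he : IsIdempotentElem e) (hf : IsIdempotentElem f) :
    IsIdempotentElem (e * f) := by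
  obtain ⟨g, hg⟩ : ∃ g, (e * f)⁻¹ = g := ⟨_, rfl⟩
  have hfg : e * f * g * (e * f) = e * f := hg ▸ mul_inv_mul _
  have hgf : g * (e * f) * g = g := hg ▸ inv_mul_inv _
  have h₁ : e * f * (f * g * e) * (e * f) = e * f :=
    calc e * f * (f * g * e) * (e * f) = e * (f * f) * g * (e * e) * f := by
          simp only [mul_assoc]
      _ = e * f * g * (e * f) := by rw [hf.eq, he.eq]; simp only [mul_assoc]
      _ = e * f := hfg
  have h₂ : f * g * e * (e * f) * (f * g * e) = f * g * e :=
    calc f * g * e * (e * f) * (f * g * e) = f * (g * (e * e) * (f * f) * g) * e := by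
          simp only [mul_assoc]
      _ = f * (g * (e * f) * g) * e := by rw [he.eq, hf.eq]; simp only [mul_assoc]
      _ = f * g * e := by rw [hgf]
  -- uniqueness of inverses gives `g = f * g * e`, and this forces `g` to be idempotent
  have hg' : f * g * e = g := by
    have := eq_inv_of_mul_mul _ _ h₁ h₂
    rwa [hg] at this
  have hgg : IsIdempotentElem g :=
    calc g * g = f * (g * (e * f) * g) * e := by
          conv_lhs => rw [← hg']
          simp only [mul_assoc]
      _ = g := by rw [hgf, hg']
  rw [← inv_inv (e * f), hg, inv_eq_self hgg]
  exact hgg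

theorem idem_mul_comm (he : IsIdempotentElem e) (hf : IsIdempotentElem f) :
    e * f = f * e := by
  have h₁ : e * f * (f * e) * (e * f) = e * f :=
    calc e * f * (f * e) * (e * f) = e * (f * f) * (e * e) * f := by simp only [mul_assoc]
      _ = (e * f) * (e * f) := by rw [hf.eq, he.eq]; simp only [mul_assoc]
      _ = e * f := (isIdempotentElem_mul he hf).eq
  have h₂ : f * e * (e * f) * (f * e) = f * e :=
    calc f * e * (e * f) * (f * e) = f * (e * e) * (f * f) * e := by simp only [mul_assoc]
      _ = (f * e) * (f * e) := by rw [he.eq, hf.eq]; simp only [mul_assoc]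
      _ = f * e := (isIdempotentElem_mul hf he).eq
  rw [eq_inv_of_mul_mul _ _ h₁ h₂, inv_eq_self (isIdempotentElem_mul he hf)]

theorem mul_idem_comm (he : IsIdempotentElem e) (x : S) : x * e = e * x := by
  obtain ⟨p, hp⟩ : ∃ p, x⁻¹ * x = p := ⟨_, rfl⟩
  have hpe : e * p = p * e := idem_mul_comm he (hp ▸ isIdempotentElem_inv_mul x)
  have hxp : x * p = x := by rw [← hp, ← mul_assoc, mul_inv_mul]
  have hpx : p * x⁻¹ = x⁻¹ := by rw [← hp, inv_mul_inv]
  -- with `(x * e)⁻¹ = e * x⁻¹`, the Clifford condition for `x * e` reads `x e x⁻¹ = e x⁻¹ x`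
  have hinv : (x * e)⁻¹ = e * x⁻¹ := by
    refine (eq_inv_of_mul_mul _ _ ?_ ?_).symm
    · calc x * e * (e * x⁻¹) * (x * e) = x * ((e * e) * p) * e := by
            rw [← hp]; simp only [mul_assoc]
        _ = x * p * e * e := by rw [he.eq, hpe]; simp only [mul_assoc]
        _ = x * e := by rw [hxp, mul_assoc, he.eq]
    · calc e * x⁻¹ * (x * e) * (e * x⁻¹) = e * ((p * (e * e)) * x⁻¹) := by
            rw [← hp]; simp only [mul_assoc]
        _ = e * (e * (p * x⁻¹)) := by rw [he.eq, ← hpe]; simp only [mul_assoc]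
        _ = e * x⁻¹ := by rw [← mul_assoc, he.eq, hpx]
  have key : x * e * x⁻¹ = e * p :=
    calc x * e * x⁻¹ = x * (e * e) * x⁻¹ := by rw [he.eq]
      _ = x * e * (x * e)⁻¹ := by rw [hinv]; simp only [mul_assoc]
      _ = (x * e)⁻¹ * (x * e) := mul_inv_comm _
      _ = e * (p * e) := by rw [hinv, ← hp]; simp only [mul_assoc]
      _ = e * p := by rw [← hpe, ← mul_assoc, he.eq]
  calc x * e = x * (p * e) := by rw [← mul_assoc, hxp]
    _ = x * e * x⁻¹ * x := by rw [← hpe, ← hp]; simp only [mul_assoc]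
    _ = e * x := by rw [key, mul_assoc, ← hp, ← mul_inv_comm, mul_inv_mul]

theorem mul_inv_rev (x y : S) : (x * y)⁻¹ = y⁻¹ * x⁻¹ := by
  have hq := isIdempotentElem_cliffordProj y
  refine (eq_inv_of_mul_mul _ _ ?_ ?_).symm
  · calc x * y * (y⁻¹ * x⁻¹) * (x * y) = x * (cliffordProj y * (x⁻¹ * x)) * y := by
          simp only [cliffordProj, mul_assoc]
      _ = x * x⁻¹ * x * (y * y⁻¹ * y) := by
          rw [← mul_idem_comm hq]; simp only [cliffordProj, mul_assoc]
      _ = x * y := by rw [mul_inv_mul, mul_inv_mul]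
  · calc y⁻¹ * x⁻¹ * (x * y) * (y⁻¹ * x⁻¹) = y⁻¹ * ((x⁻¹ * x) * cliffordProj y) * x⁻¹ := by
          simp only [cliffordProj, mul_assoc]
      _ = y⁻¹ * y * y⁻¹ * (x⁻¹ * x * x⁻¹) := by
          rw [mul_idem_comm hq]; simp only [cliffordProj, mul_assoc]
      _ = y⁻¹ * x⁻¹ := by rw [inv_mul_inv, inv_mul_inv]

theorem cliffordProj_mul (x y : S) :
    cliffordProj (x * y) = cliffordProj x * cliffordProj y := by
  calc cliffordProj (x * y) = x * (cliffordProj y * x⁻¹) := by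
        simp only [cliffordProj, mul_inv_rev, mul_assoc]
    _ = cliffordProj x * cliffordProj y := by
        rw [← mul_idem_comm (isIdempotentElem_cliffordProj y), ← mul_assoc]; rfl

theorem cliffordProj_inv (x : S) : cliffordProj x⁻¹ = cliffordProj x := by
  rw [cliffordProj, inv_inv, ← mul_inv_comm]; rfl

theorem cliffordProj_eq_self (he : IsIdempotentElem e) : cliffordProj e = e := by
  rw [cliffordProj, inv_eq_self he, he.eq]

theorem mul_cliffordProj (x : S) : x * cliffordProj x = x := by
  rw [cliffordProj, mul_inv_comm, ← mul_assoc, mul_inv_mul]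

theorem idem_mul_mul (he : IsIdempotentElem e) (x y : S) : e * (x * y) = e * x * (e * y) := by
  calc e * (x * y) = e * e * x * y := by rw [he.eq]; simp only [mul_assoc]
    _ = e * (x * e) * y := by rw [mul_idem_comm he x]; simp only [mul_assoc]
    _ = e * x * (e * y) := by simp only [mul_assoc]

theorem idem_mul_inv (he : IsIdempotentElem e) (x : S) : e * x⁻¹ = (e * x)⁻¹ := by
  rw [mul_inv_rev, inv_eq_self he, mul_idem_comm he]

theorem mul_cliffordProj_of_mul_cliffordProj_mul {x y : S} (h : e * cliffordProj (x * y) = e) :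
    e * cliffordProj x = e ∧ e * cliffordProj y = e := by
  rw [cliffordProj_mul] at h
  have hp := isIdempotentElem_cliffordProj x
  have hq := isIdempotentElem_cliffordProj y
  constructor
  · calc e * cliffordProj x = e * (cliffordProj x * cliffordProj y) * cliffordProj x := by rw [h]
      _ = e * (cliffordProj x * (cliffordProj y * cliffordProj x)) := by simp only [mul_assoc]
      _ = e * ((cliffordProj x * cliffordProj x) * cliffordProj y) := by
          rw [mul_idem_comm hp (cliffordProj y)]; simp only [mul_assoc]
      _ = e := by rw [hp.eq, h]
  · calc e * cliffordProj y = e * (cliffordProj x * cliffordProj y) * cliffordProj y := by rw [h]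
      _ = e * (cliffordProj x * (cliffordProj y * cliffordProj y)) := by simp only [mul_assoc]
      _ = e := by rw [hq.eq, h]

theorem cliffordProj_idem_mul (he : IsIdempotentElem e) {x : S} (hx : e * cliffordProj x = e) :
    cliffordProj (e * x) = e := by
  rw [cliffordProj_mul, cliffordProj_eq_self he, hx]

theorem mul_inv_mul_mul_inv {a b : S} (c : S) (hb : cliffordProj b = cliffordProj a) :
    a * b⁻¹ * (b * c⁻¹) = a * c⁻¹ :=
  calc a * b⁻¹ * (b * c⁻¹) = a * (b * b⁻¹) * c⁻¹ := by rw [mul_inv_comm b]; simp only [mul_assoc]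
    _ = a * c⁻¹ := by rw [show b * b⁻¹ = cliffordProj a from hb, mul_cliffordProj]

theorem mul_mul_inv_mul_inv {a c : S} (b : S) (hc : cliffordProj c = cliffordProj a) :
    a * c * (b * c)⁻¹ = a * b⁻¹ :=
  calc a * c * (b * c)⁻¹ = a * (c * c⁻¹) * b⁻¹ := by rw [mul_inv_rev]; simp only [mul_assoc]
    _ = a * b⁻¹ := by rw [show c * c⁻¹ = cliffordProj a from hc, mul_cliffordProj]

theorem mul_inv_inv_rev (a b : S) : (a * b⁻¹)⁻¹ = b * a⁻¹ := by rw [mul_inv_rev, inv_inv]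

theorem inv_mul_eq_conj {a b : S} (h : cliffordProj b = cliffordProj a) :
    a⁻¹ * b = a⁻¹ * (b * a⁻¹) * a⁻¹⁻¹ :=
  calc a⁻¹ * b = a⁻¹ * (b * (b * b⁻¹)) := by rw [show b * (b * b⁻¹) = b from mul_cliffordProj b]
    _ = a⁻¹ * (b * a⁻¹) * a⁻¹⁻¹ := by
        rw [show b * b⁻¹ = a⁻¹ * a from h.trans (mul_inv_comm a), inv_inv]; simp only [mul_assoc]

theorem conj_inv_conj {x v : S} (hv : cliffordProj v = cliffordProj x) :
    x * (x⁻¹ * v * x⁻¹⁻¹) * x⁻¹ = v :=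
  calc x * (x⁻¹ * v * x⁻¹⁻¹) * x⁻¹ = cliffordProj x * v * cliffordProj x := by
        rw [inv_inv]; simp only [cliffordProj, mul_assoc]
    _ = v := by rw [← hv, show cliffordProj v * v = v from mul_inv_mul v, mul_cliffordProj]

theorem conj_inv (x v : S) : (x * v * x⁻¹)⁻¹ = x * v⁻¹ * x⁻¹ := by
  rw [mul_inv_rev, mul_inv_rev, inv_inv, mul_assoc]

theorem cliffordProj_mul_of_eq (he : IsIdempotentElem e) {a b : S} (ha : cliffordProj a = e)
    (hb : cliffordProj b = e) : cliffordProj (a * b) = e := by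
  rw [cliffordProj_mul, ha, hb, he.eq]

theorem cliffordProj_conj (he : IsIdempotentElem e) {x v : S} (hx : cliffordProj x = e)
    (hv : cliffordProj v = e) : cliffordProj (x * v * x⁻¹) = e :=
  cliffordProj_mul_of_eq he (cliffordProj_mul_of_eq he hx hv) (by rw [cliffordProj_inv, hx])

theorem idem_mul_mul_inv_mul {x : S} (he : IsIdempotentElem e) (hx : cliffordProj (e * x) = e)
    (y : S) : e * y * (e * x)⁻¹ * (x * e) = y * e :=
  calc e * y * (e * x)⁻¹ * (x * e) = e * y * cliffordProj (e * x) := by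
        rw [mul_idem_comm he x, mul_assoc, ← mul_inv_comm]; rfl
    _ = y * e := by rw [hx, mul_assoc, mul_idem_comm he y, ← mul_assoc, he.eq]

def proj (x : S) : idempotents S := ⟨cliffordProj x, isIdempotentElem_cliffordProj x⟩

theorem proj_inv (x : S) : proj x⁻¹ = proj x := Subtype.ext (cliffordProj_inv x)

theorem proj_mul_comm (x y : S) : proj (x * y) = proj (y * x) :=
  Subtype.ext <| by
    simp only [proj, cliffordProj_mul,
      idem_mul_comm (isIdempotentElem_cliffordProj x) (isIdempotentElem_cliffordProj y)]

def upperCone (e : S) : Set (idempotents S) := {f | e * f = e}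

def IsSubinvariant (ρ : idempotents S → idempotents S → ℝ) : Prop :=
  ∀ (x y z : ↥(idempotents S)) (hzx : (z : S) * (x : S) ∈ idempotents S)
    (hzy : (z : S) * (y : S) ∈ idempotents S),
    ρ ⟨(z : S) * (x : S), hzx⟩ ⟨(z : S) * (y : S), hzy⟩ ≤ ρ x y

variable {ρ : idempotents S → idempotents S → ℝ}

theorem proj_mul (z x : S) :
    proj (z * x) = ⟨proj z * proj x, isIdempotentElem_mul (proj z).2 (proj x).2⟩ :=
  Subtype.ext (cliffordProj_mul z x)

theorem IsSubinvariant.proj_mul_left_le (h : IsSubinvariant ρ) (z x y : S) :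
    ρ (proj (z * x)) (proj (z * y)) ≤ ρ (proj x) (proj y) := by
  rw [proj_mul, proj_mul]
  exact h _ _ _ _ _

theorem IsSubinvariant.proj_mul_right_le (h : IsSubinvariant ρ) (z x y : S) :
    ρ (proj (x * z)) (proj (y * z)) ≤ ρ (proj x) (proj y) := by
  rw [proj_mul_comm x, proj_mul_comm y]
  exact h.proj_mul_left_le z x y

variable [TopologicalSpace S]

theorem continuous_proj [ContinuousMul S] [ContinuousInv S] : Continuous (proj : S → _) :=
  (continuous_id.mul continuous_inv).subtype_mk _

theorem mem_interior_upperCone_of_mul [ContinuousMul S] {a b : idempotents S}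
    (ha : a ∈ interior (upperCone e)) (hab : (a : S) * b = a) : b ∈ interior (upperCone e) := by
  let φ : idempotents S → idempotents S := fun f => ⟨a * f, isIdempotentElem_mul a.2 f.2⟩
  have hφ : Continuous φ := (continuous_const.mul continuous_subtype_val).subtype_mk _
  refine interior_maximal (fun f hf => ?_) (isOpen_interior.preimage hφ)
    (show φ b ∈ _ from (Subtype.ext hab : φ b = a) ▸ ha)
  have haf : e * (a * f) = e := (interior_subset hf : φ f ∈ upperCone e)
  calc e * f = e * (a * f) * f := by rw [haf]
    _ = e := by rw [mul_assoc, mul_assoc, f.2, haf]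

noncomputable def depthAt (ρ : idempotents S → idempotents S → ℝ) (e x : S) : ℝ :=
  depth ρ (interior (upperCone e)) (proj x)

theorem depthAt_inv (x : S) : depthAt ρ e x⁻¹ = depthAt ρ e x := by
  rw [depthAt, proj_inv, depthAt]

section DepthAt

variable (hρ : IsCompatibleMetric ρ)
include hρ

theorem depthAt_le_add (x y : S) : depthAt ρ e x ≤ depthAt ρ e y + ρ (proj x) (proj y) :=
  depth_le_add hρ _ _

theorem depthAt_pos {x : S} (h : proj x ∈ interior (upperCone e)) : 0 < depthAt ρ e x :=
  depth_pos hρ isOpen_interior h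

theorem mul_cliffordProj_of_depthAt_pos {x : S} (h : 0 < depthAt ρ e x) :
    e * cliffordProj x = e :=
  (interior_subset (mem_of_depth_pos hρ h) : proj x ∈ upperCone e)

theorem cliffordProj_mul_of_depthAt_pos (he : IsIdempotentElem e) {x : S}
    (h : 0 < depthAt ρ e x) : cliffordProj (e * x) = e :=
  cliffordProj_idem_mul he (mul_cliffordProj_of_depthAt_pos hρ h)

theorem depthAt_mul_left_le [ContinuousMul S] (hsub : IsSubinvariant ρ) (z x : S) :
    depthAt ρ e (z * x) ≤ depthAt ρ e x := by
  -- `k ↦ π (z x) * k` keeps `k` outside the open cone and moves it no farther from `π (z x)`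
  -- than `k` is from `π x`, by subinvariance and `π (z x) = π (z x) * π x`
  refine depth_le_depth hρ fun k hk =>
    ⟨⟨(proj (z * x) : S) * k, isIdempotentElem_mul (proj _).2 k.2⟩,
      fun hmem => hk (mem_interior_upperCone_of_mul hmem ?_), ?_⟩
  · show (proj (z * x) : S) * k * k = (proj (z * x) : S) * k
    rw [mul_assoc, k.2]
  · have hzx : proj (z * x) =
        ⟨(proj (z * x) : S) * proj x, isIdempotentElem_mul (proj _).2 (proj x).2⟩ :=
      Subtype.ext <| by
        simp only [proj, cliffordProj_mul, mul_assoc, (isIdempotentElem_cliffordProj x).eq]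
    have := hsub (proj x) k (proj (z * x)) (isIdempotentElem_mul (proj _).2 (proj x).2)
      (isIdempotentElem_mul (proj _).2 k.2)
    rwa [← hzx] at this

theorem depthAt_mul_right_le [ContinuousMul S] (hsub : IsSubinvariant ρ) (z x : S) :
    depthAt ρ e (x * z) ≤ depthAt ρ e x := by
  rw [depthAt, proj_mul_comm]
  exact depthAt_mul_left_le hρ hsub z x

end DepthAt

structure IsInvariantNhd (e : S) (V : Set S) : Prop where
  mem_nhdsWithin : V ∈ 𝓝[cliffordProj ⁻¹' {e}] e
  inv_mem : ∀ a ∈ V, a⁻¹ ∈ V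
  conj_mem : ∀ x ∈ cliffordProj ⁻¹' {e}, ∀ v ∈ V, x * v * x⁻¹ ∈ V

structure IsInvariantNhdSeq (e : S) (V : ℕ → Set S) : Prop where
  isInvariantNhd (m : ℕ) : IsInvariantNhd e (V m)
  mul_mul_mem (m : ℕ) : ∀ a ∈ V (m + 1), ∀ b ∈ V (m + 1), ∀ c ∈ V (m + 1), a * b * c ∈ V m
  hasAntitoneBasis : (𝓝[cliffordProj ⁻¹' {e}] e).HasAntitoneBasis V

theorem IsInvariantNhd.self_mem {V : Set S} (hV : IsInvariantNhd e V) (he : IsIdempotentElem e) :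
    e ∈ V :=
  mem_of_mem_nhdsWithin (show e ∈ cliffordProj ⁻¹' {e} from cliffordProj_eq_self he)
    hV.mem_nhdsWithin

theorem tendsto_inv_nhdsWithin [ContinuousInv S] (he : IsIdempotentElem e) :
    Tendsto (·⁻¹) (𝓝[cliffordProj ⁻¹' {e}] e) (𝓝[cliffordProj ⁻¹' {e}] e) :=
  tendsto_nhdsWithin_iff.2 ⟨(continuous_inv.tendsto' e e (inv_eq_self he)).mono_left
    nhdsWithin_le_nhds, eventually_mem_nhdsWithin.mono fun a ha => (cliffordProj_inv a).trans ha⟩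

theorem exists_isInvariantNhd_subset [ContinuousInv S] (hbal : IsBalancedMaximalSubgroup S e)
    (he : IsIdempotentElem e) {M : Set S} (hM : M ∈ 𝓝[cliffordProj ⁻¹' {e}] e) :
    ∃ V ⊆ M, IsInvariantNhd e V := by
  obtain ⟨V, hVM, hV, hconj⟩ :=
    hbal (M ∩ cliffordProj ⁻¹' {e}) Set.inter_subset_right (inter_mem hM self_mem_nhdsWithin)
  have hconj' : ∀ x ∈ cliffordProj ⁻¹' {e}, ∀ v ∈ V, x * v * x⁻¹ ∈ V := fun x hx v hv =>
    hconj x hx ▸ Set.mem_image_of_mem _ hv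
  refine ⟨V ∩ (·⁻¹) ⁻¹' V, fun a ha => (hVM ha.1).1,
    ⟨inter_mem hV (tendsto_inv_nhdsWithin he hV), ?_, ?_⟩⟩
  · exact fun a ha => ⟨ha.2, by rw [Set.mem_preimage, inv_inv]; exact ha.1⟩
  · exact fun x hx v hv => ⟨hconj' x hx v hv.1, by
      rw [Set.mem_preimage, conj_inv]; exact hconj' x hx _ hv.2⟩

theorem exists_isInvariantNhdSeq [ContinuousMul S] [ContinuousInv S]
    [FirstCountableTopology (cliffordProj ⁻¹' {e})] (hbal : IsBalancedMaximalSubgroup S e)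
    (he : IsIdempotentElem e) : ∃ V, IsInvariantNhdSeq e V := by
  have heH : e ∈ cliffordProj ⁻¹' {e} := cliffordProj_eq_self he
  have : (𝓝[cliffordProj ⁻¹' {e}] e).IsCountablyGenerated := by
    rw [← map_nhds_subtype_val ⟨e, heH⟩]
    infer_instance
  have hbasis : (𝓝[cliffordProj ⁻¹' {e}] e).HasBasis (IsInvariantNhd e) id :=
    ⟨fun M => ⟨fun hM => (exists_isInvariantNhd_subset hbal he hM).imp fun V ⟨hVM, hV⟩ => ⟨hV, hVM⟩,
      fun ⟨V, hV, hVM⟩ => mem_of_superset hV.mem_nhdsWithin hVM⟩⟩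
  obtain ⟨s, hs, hanti⟩ := hbasis.exists_antitone_subbasis
  obtain ⟨φ, -, hφ, hanti'⟩ := hanti.subbasis_with_rel
    (r := fun m n => ∀ a ∈ s n, ∀ b ∈ s n, ∀ c ∈ s n, a * b * c ∈ s m) fun m => by
      obtain ⟨N, hN, hNs⟩ := exists_mul_mul_subset (H := cliffordProj ⁻¹' {e})
        (fun a ha b hb => cliffordProj_mul_of_eq he ha hb) he (hs m).mem_nhdsWithin
      obtain ⟨n, -, hn⟩ := hanti.1.mem_iff.1 hN
      exact eventually_atTop.2 ⟨n, fun k hk a ha b hb c hc =>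
        hNs a (hn (hanti.2 hk ha)) b (hn (hanti.2 hk hb)) c (hn (hanti.2 hk hc))⟩
  exact ⟨s ∘ φ, ⟨fun m => hs _, fun m => hφ m.lt_succ_self, hanti'⟩⟩

variable (ρ) in
/-- The condition on the `H_e`-components is imposed only deep inside the cone above `e`, where
`x ↦ e * x` is multiplicative; the ratio `4` leaves room for the three steps of `entourage_comp`. -/
def entourage (e : S) (V : Set S) (m : ℕ) : Set (S × S) :=
  {p | ρ (proj p.1) (proj p.2) < (4⁻¹ : ℝ) ^ m ∧
    ((4⁻¹ : ℝ) ^ m < depthAt ρ e p.1 → (4⁻¹ : ℝ) ^ m < depthAt ρ e p.2 →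
      e * p.1 * (e * p.2)⁻¹ ∈ V)}

section Entourage

variable {V : Set S} (hρ : IsCompatibleMetric ρ) (he : IsIdempotentElem e)
include hρ he

theorem cliffordProj_mul_of_lt_depthAt (m : ℕ) {x : S} (h : (4⁻¹ : ℝ) ^ m < depthAt ρ e x) :
    cliffordProj (e * x) = e :=
  cliffordProj_mul_of_depthAt_pos hρ he ((by positivity : (0 : ℝ) < 4⁻¹ ^ m).trans h)

theorem entourage_refl (hV : IsInvariantNhd e V) (m : ℕ) (x : S) :
    (x, x) ∈ entourage ρ e V m :=
  ⟨by rw [hρ.dist_self]; positivity, fun hx _ => by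
    rw [show e * x * (e * x)⁻¹ = e from cliffordProj_mul_of_lt_depthAt hρ he m hx]
    exact hV.self_mem he⟩

omit he in
theorem entourage_symm (hV : IsInvariantNhd e V) {m : ℕ} {x y : S}
    (h : (x, y) ∈ entourage ρ e V m) : (y, x) ∈ entourage ρ e V m :=
  ⟨hρ.dist_comm (proj x) (proj y) ▸ h.1, fun hy hx =>
    mul_inv_inv_rev (e * x) (e * y) ▸ hV.inv_mem _ (h.2 hx hy)⟩

theorem entourage_comp {V' : Set S} (hV' : ∀ a ∈ V', ∀ b ∈ V', ∀ c ∈ V', a * b * c ∈ V)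
    {m : ℕ} {x y z w : S} (hxy : (x, y) ∈ entourage ρ e V' (m + 1))
    (hyz : (y, z) ∈ entourage ρ e V' (m + 1)) (hzw : (z, w) ∈ entourage ρ e V' (m + 1)) :
    (x, w) ∈ entourage ρ e V m := by
  have hq : (4⁻¹ : ℝ) ^ m = 4 * 4⁻¹ ^ (m + 1) := by rw [pow_succ]; ring
  have hpos : (0 : ℝ) < 4⁻¹ ^ (m + 1) := by positivity
  refine ⟨?_, fun hx hw => ?_⟩
  · linarith [hρ.dist_triangle (proj x) (proj y) (proj w),
      hρ.dist_triangle (proj y) (proj z) (proj w), hxy.1, hyz.1, hzw.1]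
  have hy : (4⁻¹ : ℝ) ^ (m + 1) < depthAt ρ e y := by
    linarith [depthAt_le_add hρ (e := e) x y, hxy.1]
  have hz : (4⁻¹ : ℝ) ^ (m + 1) < depthAt ρ e z := by
    linarith [depthAt_le_add hρ (e := e) w z, hρ.dist_comm (proj w) (proj z), hzw.1]
  have hx' : (4⁻¹ : ℝ) ^ (m + 1) < depthAt ρ e x := by linarith
  have hw' : (4⁻¹ : ℝ) ^ (m + 1) < depthAt ρ e w := by linarith
  have hπx := cliffordProj_mul_of_lt_depthAt hρ he _ hx'
  show e * x * (e * w)⁻¹ ∈ V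
  rw [← mul_inv_mul_mul_inv (e * w) ((cliffordProj_mul_of_lt_depthAt hρ he _ hz).trans hπx.symm),
    ← mul_inv_mul_mul_inv (e * z) ((cliffordProj_mul_of_lt_depthAt hρ he _ hy).trans hπx.symm)]
  exact hV' _ (hxy.2 hx' hy) _ (hyz.2 hy hz) _ (hzw.2 hz hw')

theorem entourage_mul_left [ContinuousMul S] (hsub : IsSubinvariant ρ) (hV : IsInvariantNhd e V)
    {m : ℕ} {x y : S} (z : S) (h : (x, y) ∈ entourage ρ e V m) :
    (z * x, z * y) ∈ entourage ρ e V m := by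
  refine ⟨(hsub.proj_mul_left_le z x y).trans_lt h.1, fun hx hy => ?_⟩
  have hπz : cliffordProj (e * z) = e := cliffordProj_idem_mul he
    (mul_cliffordProj_of_mul_cliffordProj_mul (mul_cliffordProj_of_depthAt_pos hρ
      ((by positivity : (0 : ℝ) < 4⁻¹ ^ m).trans hx))).1
  have hconj : e * (z * x) * (e * (z * y))⁻¹ = e * z * (e * x * (e * y)⁻¹) * (e * z)⁻¹ := by
    rw [idem_mul_mul he, idem_mul_mul he, mul_inv_rev]
    simp only [mul_assoc]
  rw [hconj]
  exact hV.conj_mem _ hπz _ (h.2 (hx.trans_le (depthAt_mul_left_le hρ hsub z x))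
    (hy.trans_le (depthAt_mul_left_le hρ hsub z y)))

theorem entourage_mul_right [ContinuousMul S] (hsub : IsSubinvariant ρ) {m : ℕ} {x y : S}
    (z : S) (h : (x, y) ∈ entourage ρ e V m) : (x * z, y * z) ∈ entourage ρ e V m := by
  refine ⟨(hsub.proj_mul_right_le z x y).trans_lt h.1, fun hx hy => ?_⟩
  obtain ⟨hex, hez⟩ := mul_cliffordProj_of_mul_cliffordProj_mul (mul_cliffordProj_of_depthAt_pos hρ
    ((by positivity : (0 : ℝ) < 4⁻¹ ^ m).trans hx))
  rw [idem_mul_mul he, idem_mul_mul he, mul_mul_inv_mul_inv _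
    ((cliffordProj_idem_mul he hez).trans (cliffordProj_idem_mul he hex).symm)]
  exact h.2 (hx.trans_le (depthAt_mul_right_le hρ hsub z x))
    (hy.trans_le (depthAt_mul_right_le hρ hsub z y))

theorem entourage_inv (hV : IsInvariantNhd e V) {m : ℕ} {x y : S}
    (h : (x, y) ∈ entourage ρ e V m) : (x⁻¹, y⁻¹) ∈ entourage ρ e V m := by
  refine ⟨by rw [proj_inv, proj_inv]; exact h.1, fun hx hy => ?_⟩
  rw [depthAt_inv] at hx hy
  have hπx := cliffordProj_mul_of_lt_depthAt hρ he m hx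
  show e * x⁻¹ * (e * y⁻¹)⁻¹ ∈ V
  rw [idem_mul_inv he, idem_mul_inv he, inv_inv,
    inv_mul_eq_conj ((cliffordProj_mul_of_lt_depthAt hρ he m hy).trans hπx.symm)]
  exact hV.conj_mem _ (by rw [Set.mem_preimage, cliffordProj_inv, hπx]; rfl) _
    (mul_inv_inv_rev (e * x) (e * y) ▸ hV.inv_mem _ (h.2 hx hy))

theorem entourage_mem_nhds [ContinuousMul S] [ContinuousInv S]
    (hV : V ∈ 𝓝[cliffordProj ⁻¹' {e}] e) (m : ℕ) (x : S) :
    {y | (x, y) ∈ entourage ρ e V m} ∈ 𝓝 x := by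
  have hball : ∀ᶠ y in 𝓝 x, ρ (proj x) (proj y) < (4⁻¹ : ℝ) ^ m :=
    continuous_proj.continuousAt.preimage_mem_nhds
      ((hρ.nhds_basis _).mem_of_mem (by positivity))
  refine hball.and ?_
  by_cases hx : (4⁻¹ : ℝ) ^ m < depthAt ρ e x
  · have hπx := cliffordProj_mul_of_lt_depthAt hρ he m hx
    have ht : Tendsto (fun y => e * x * (e * y)⁻¹) (𝓝 x) (𝓝 e) :=
      (continuous_const.mul (continuous_const.mul continuous_id).inv).tendsto' x e hπx
    filter_upwards [ht.eventually (mem_nhdsWithin_iff_eventually.1 hV)] with y hy _ hy'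
    exact hy (cliffordProj_mul_of_eq he hπx
      (by rw [cliffordProj_inv]; exact cliffordProj_mul_of_lt_depthAt hρ he m hy'))
  · exact univ_mem' fun y hx' => absurd hx' hx

end Entourage

variable {A : Set S}

theorem exists_nhds_control [ContinuousMul S] (hdi : Ditopological S)
    (hAdense : IsUDenseInIdempotents S A) (hρ : IsCompatibleMetric ρ) {x : S} {O : Set S}
    (hO : O ∈ 𝓝 x) :
    ∃ e ∈ A, 0 < depthAt ρ e x ∧ ∃ N ∈ 𝓝[cliffordProj ⁻¹' {e}] e, ∃ δ > 0,
      ∀ y, ρ (proj x) (proj y) < δ → e * y * (e * x)⁻¹ ∈ N → y ∈ O := by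
  obtain ⟨U, hU, W, -, hW, hdiv⟩ := hdi x O hO
  have hW' : W ∈ map Subtype.val (𝓝 (proj x)) := by
    rw [map_nhds_subtype_val]
    exact hW
  have hU' : {f : idempotents S | x * f ∈ interior U} ∈ 𝓝 (proj x) :=
    (continuous_const.mul continuous_subtype_val).continuousAt.preimage_mem_nhds <| by
      show interior U ∈ 𝓝 (x * cliffordProj x)
      rw [mul_cliffordProj]
      exact interior_mem_nhds.2 hU
  obtain ⟨⟨e, he⟩, heA, ⟨heW, heU⟩, hint⟩ := hAdense (proj x) _ (inter_mem hW' hU')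
  replace he : IsIdempotentElem e := he
  have hπx : cliffordProj (e * x) = e :=
    cliffordProj_idem_mul he (interior_subset hint : proj x ∈ upperCone e)
  have hxe : interior U ∈ 𝓝 (e * (x * e)) := by
    rw [mul_idem_comm he x, ← mul_assoc, he.eq, ← mul_idem_comm he x]
    exact isOpen_interior.mem_nhds heU
  have hN : {a | a * (x * e) ∈ interior U} ∈ 𝓝[cliffordProj ⁻¹' {e}] e :=
    mem_nhdsWithin_of_mem_nhds ((continuous_mul_const (x * e)).continuousAt.preimage_mem_nhds hxe)
  obtain ⟨δ, hδ, hball⟩ := (hρ.nhds_basis _).mem_iff.1 hW'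
  -- `y * e = (e * y) (e * x)⁻¹ (x * e) ∈ U` and `π y ∈ W`, so `y ∈ (U ÷ W) ∩ π⁻¹ W ⊆ O`
  refine ⟨e, heA, depthAt_pos hρ hint, _, hN, δ, hδ, fun y hy hyN => hdiv
    ⟨⟨y * e, interior_subset ?_, e, heW, rfl⟩, hball hy⟩⟩
  rwa [Set.mem_ofPred_eq, idem_mul_mul_inv_mul he hπx] at hyN

variable (ρ A) in
/-- For `ι` injective on `A`, only finitely many `e` constrain each level, so the levels are
neighbourhoods (`entourageSeq_mem_nhds`). -/
def entourageSeq (ι : S → ℕ) (V : S → ℕ → Set S) (k : ℕ) : Set (S × S) :=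
  {p | ∀ e ∈ A, ι e < k → p ∈ entourage ρ e (V e k) k}

section EntourageSeq

variable {ι : S → ℕ} {V : S → ℕ → Set S} (hρ : IsCompatibleMetric ρ)
  (hAE : A ⊆ idempotents S) (hV : ∀ e ∈ A, IsInvariantNhdSeq e (V e))
include hρ hAE hV

theorem entourageSeq_refl (k : ℕ) (x : S) : (x, x) ∈ entourageSeq ρ A ι V k :=
  fun e he _ => entourage_refl hρ (hAE he) ((hV e he).isInvariantNhd k) k x

omit hAE in
theorem entourageSeq_symm {k : ℕ} {x y : S} (h : (x, y) ∈ entourageSeq ρ A ι V k) :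
    (y, x) ∈ entourageSeq ρ A ι V k :=
  fun e he hk => entourage_symm hρ ((hV e he).isInvariantNhd k) (h e he hk)

theorem entourageSeq_comp {k : ℕ} {x y z w : S} (hxy : (x, y) ∈ entourageSeq ρ A ι V (k + 1))
    (hyz : (y, z) ∈ entourageSeq ρ A ι V (k + 1)) (hzw : (z, w) ∈ entourageSeq ρ A ι V (k + 1)) :
    (x, w) ∈ entourageSeq ρ A ι V k := fun e he hk =>
  entourage_comp hρ (hAE he) ((hV e he).mul_mul_mem k) (hxy e he (by omega))
    (hyz e he (by omega)) (hzw e he (by omega))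

theorem entourageSeq_mul_left [ContinuousMul S] (hsub : IsSubinvariant ρ) {k : ℕ} {x y : S}
    (z : S) (h : (x, y) ∈ entourageSeq ρ A ι V k) : (z * x, z * y) ∈ entourageSeq ρ A ι V k :=
  fun e he hk => entourage_mul_left hρ (hAE he) hsub ((hV e he).isInvariantNhd k) z (h e he hk)

omit hV in
theorem entourageSeq_mul_right [ContinuousMul S] (hsub : IsSubinvariant ρ) {k : ℕ} {x y : S}
    (z : S) (h : (x, y) ∈ entourageSeq ρ A ι V k) : (x * z, y * z) ∈ entourageSeq ρ A ι V k :=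
  fun e he hk => entourage_mul_right hρ (hAE he) hsub z (h e he hk)

theorem entourageSeq_inv {k : ℕ} {x y : S} (h : (x, y) ∈ entourageSeq ρ A ι V k) :
    (x⁻¹, y⁻¹) ∈ entourageSeq ρ A ι V k :=
  fun e he hk => entourage_inv hρ (hAE he) ((hV e he).isInvariantNhd k) (h e he hk)

theorem entourageSeq_mem_nhds [ContinuousMul S] [ContinuousInv S] (hι : A.InjOn ι) (k : ℕ)
    (x : S) : {y | (x, y) ∈ entourageSeq ρ A ι V k} ∈ 𝓝 x := by
  have hfin : {e ∈ A | ι e < k}.Finite :=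
    Set.Finite.of_finite_image ((Set.finite_Iio k).subset (Set.image_subset_iff.2 fun e he => he.2))
      (hι.mono fun e he => he.1)
  exact ((eventually_all_finite hfin).2 fun e he => entourage_mem_nhds hρ (hAE he.1)
    ((hV e he.1).isInvariantNhd k).mem_nhdsWithin k x).mono fun y hy e he hk => hy e ⟨he, hk⟩

theorem entourageSeq_nhds_basis [ContinuousMul S] [ContinuousInv S] (hdi : Ditopological S)
    (hAdense : IsUDenseInIdempotents S A) (hι : A.InjOn ι) (x : S) :
    (𝓝 x).HasBasis (fun _ : ℕ => True) fun k => {y | (x, y) ∈ entourageSeq ρ A ι V k} := by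
  refine ⟨fun O => ⟨fun hO => ?_, fun ⟨k, _, hk⟩ =>
    mem_of_superset (entourageSeq_mem_nhds hρ hAE hV hι k x) hk⟩⟩
  obtain ⟨e, heA, hdepth, N, hN, δ, hδ, hO⟩ := exists_nhds_control hdi hAdense hρ hO
  obtain ⟨m, -, hm⟩ := (hV e heA).hasAntitoneBasis.1.mem_iff.1 hN
  have ht := tendsto_pow_atTop_nhds_zero_of_lt_one (by norm_num : (0 : ℝ) ≤ 4⁻¹) (by norm_num)
  obtain ⟨k, hkm, hke, hkδ, hkd⟩ := ((eventually_ge_atTop m).and ((eventually_gt_atTop (ι e)).and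
    ((ht.eventually (gt_mem_nhds hδ)).and (ht.eventually (gt_mem_nhds (half_pos hdepth)))))).exists
  refine ⟨k, trivial, fun y hy => hO y ((hy e heA hke).1.trans hkδ) (hm ?_)⟩
  have hxy := hy e heA hke
  have hx : (4⁻¹ : ℝ) ^ k < depthAt ρ e x := by linarith
  have hy' : (4⁻¹ : ℝ) ^ k < depthAt ρ e y := by linarith [depthAt_le_add hρ (e := e) x y, hxy.1]
  exact (hV e heA).hasAntitoneBasis.antitone hkm (mul_inv_inv_rev (e * x) (e * y) ▸
    ((hV e heA).isInvariantNhd k).inv_mem _ (hxy.2 hx hy'))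

end EntourageSeq

theorem exists_subinvariant_metric [T1Space S] [ContinuousMul S] [ContinuousInv S]
    (hdi : Ditopological S) (hAE : A ⊆ idempotents S) (hAc : A.Countable)
    (hAdense : IsUDenseInIdempotents S A) (hρ : IsCompatibleMetric ρ) (hsub : IsSubinvariant ρ)
    (hgrp : ∀ e ∈ A, FirstCountableTopology (cliffordProj ⁻¹' {e}) ∧
      IsBalancedMaximalSubgroup S e) :
    ∃ d : S → S → ℝ, IsCompatibleMetric d ∧
      (∀ x y z : S, max (d (z * x) (z * y)) (d (x * z) (y * z)) ≤ d x y) ∧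
      (∀ x y : S, d x y = d x⁻¹ y⁻¹) := by
  obtain ⟨ι, hι⟩ := Set.countable_iff_exists_injOn.1 hAc
  choose! V hV using fun e (he : e ∈ A) =>
    have := (hgrp e he).1
    exists_isInvariantNhdSeq (hgrp e he).2 (hAE he)
  obtain ⟨d, hd, hmap⟩ := exists_isCompatibleMetric_of_nhds_basis
    (entourageSeq_refl (ι := ι) hρ hAE hV) (fun _ _ _ => entourageSeq_symm hρ hV)
    (fun _ _ _ _ _ => entourageSeq_comp hρ hAE hV)
    (entourageSeq_nhds_basis hρ hAE hV hdi hAdense hι)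
  have hinv := hmap _ fun _ _ _ => entourageSeq_inv hρ hAE hV
  refine ⟨d, hd, fun x y z => max_le ?_ ?_, fun x y => le_antisymm ?_ (hinv x y)⟩
  · exact hmap _ (fun _ _ _ => entourageSeq_mul_left hρ hAE hV hsub z) x y
  · exact hmap _ (fun _ _ _ => entourageSeq_mul_right hρ hAE hsub z) x y
  · simpa only [inv_inv] using hinv x⁻¹ y⁻¹

theorem isBalancedMaximalSubgroup_of_subinvariant {d : S → S → ℝ} (hd : IsCompatibleMetric d)
    (hleft : ∀ x y z : S, d (z * x) (z * y) ≤ d x y)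
    (hright : ∀ x y z : S, d (x * z) (y * z) ≤ d x y) {e : S} (he : IsIdempotentElem e) :
    IsBalancedMaximalSubgroup S e := by
  intro U _ hU
  have hbasis := nhdsWithin_hasBasis (hd.nhds_basis e) (cliffordProj ⁻¹' {e})
  obtain ⟨ε, hε, hεU⟩ := hbasis.mem_iff.1 hU
  have hconj : ∀ x ∈ cliffordProj ⁻¹' {e}, ∀ v ∈ {v | d e v < ε} ∩ cliffordProj ⁻¹' {e},
      x * v * x⁻¹ ∈ {v | d e v < ε} ∩ cliffordProj ⁻¹' {e} := by
    intro x (hx : cliffordProj x = e) v ⟨hv, (hvH : cliffordProj v = e)⟩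
    refine ⟨?_, cliffordProj_conj he hx hvH⟩
    calc d e (x * v * x⁻¹) = d (x * e * x⁻¹) (x * v * x⁻¹) := by
          rw [← hx, mul_cliffordProj]; rfl
      _ ≤ d e v := (hright _ _ _).trans (hleft _ _ _)
      _ < ε := hv
  refine ⟨_, hεU, hbasis.mem_of_mem hε, fun x hx => (Set.image_subset_iff.2 (hconj x hx)).antisymm
    fun v hv => ⟨x⁻¹ * v * x⁻¹⁻¹, hconj _ ?_ _ hv, conj_inv_conj (hv.2.trans hx.symm)⟩⟩
  rw [Set.mem_preimage, cliffordProj_inv]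
  exact hx

end IsCliffordSemigroup

theorem metrizable_subinvariant_iff_of_ditopological_clifford_uSemilattice_general
    (S : Type u) [Semigroup S] [TopologicalSpace S] [Inv S]
    (hS : IsTopologicalCliffordSemigroup S) (hdi : Ditopological S)
    (A : Set S) (hAE : A ⊆ idempotents S) (hAc : A.Countable)
    (hAdense : IsUDenseInIdempotents S A) :
    (∃ d : S → S → ℝ, IsCompatibleMetric d ∧
        (∀ x y z : S, max (d (z * x) (z * y)) (d (x * z) (y * z)) ≤ d x y) ∧
        (∀ x y : S, d x y = d x⁻¹ y⁻¹)) ↔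
      ((∃ ρ : ↥(idempotents S) → ↥(idempotents S) → ℝ, IsCompatibleMetric ρ ∧
          ∀ (x y z : ↥(idempotents S))
            (hzx : (z : S) * (x : S) ∈ idempotents S)
            (hzy : (z : S) * (y : S) ∈ idempotents S),
              ρ ⟨(z : S) * (x : S), hzx⟩ ⟨(z : S) * (y : S), hzy⟩ ≤ ρ x y) ∧
        ∀ e ∈ A, FirstCountableTopology ↥(cliffordProj ⁻¹' {e}) ∧
          IsBalancedMaximalSubgroup S e) := by
  obtain ⟨_, _, hinv, hlaws, huniq⟩ := hS
  have : ContinuousInv S := ⟨hinv⟩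
  have : IsCliffordSemigroup S :=
    ⟨fun x => (hlaws x).1, fun x => (hlaws x).2.1, fun x => (hlaws x).2.2, huniq⟩
  constructor
  · rintro ⟨d, hd, hsub, -⟩
    have hleft : ∀ x y z : S, d (z * x) (z * y) ≤ d x y := fun x y z =>
      (le_max_left _ _).trans (hsub x y z)
    have hright : ∀ x y z : S, d (x * z) (y * z) ≤ d x y := fun x y z =>
      (le_max_right _ _).trans (hsub x y z)
    have := hd.firstCountableTopology
    refine ⟨⟨_, hd.subtype _, fun x y z _ _ => hleft x y z⟩, fun e he => ⟨inferInstance, ?_⟩⟩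
    exact IsCliffordSemigroup.isBalancedMaximalSubgroup_of_subinvariant hd hleft hright (hAE he)
  · rintro ⟨⟨ρ, hρ, hsub⟩, hgrp⟩
    exact IsCliffordSemigroup.exists_subinvariant_metric hdi hAE hAc hAdense hρ hsub hgrp

/-- Let `S` be a ditopological Clifford semigroup whose maximal semilattice `E` is a
U-semilattice, and let `A` be a countable U-dense subset of `E`. Then `S` is
metrizable by a subinvariant metric (a compatible metric `d` with
`max {d(zx,zy), d(xz,yz)} ≤ d(x,y) = d(x⁻¹,y⁻¹)`) if and only if `E` is metrizable by
a subinvariant metric and every maximal subgroup `H_e = π⁻¹(e)`, `e ∈ A`, is first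
countable and balanced. -/
theorem metrizable_subinvariant_iff_of_ditopological_clifford_uSemilattice
    (S : Type u) [Semigroup S] [TopologicalSpace S] [Inv S]
    (hS : IsTopologicalCliffordSemigroup S) (hdi : Ditopological S)
    (hU : IdempotentsAreUSemilattice S)
    (A : Set S) (hAE : A ⊆ idempotents S) (hAc : A.Countable)
    (hAdense : IsUDenseInIdempotents S A) :
    (∃ d : S → S → ℝ, IsCompatibleMetric d ∧
        (∀ x y z : S, max (d (z * x) (z * y)) (d (x * z) (y * z)) ≤ d x y) ∧
        (∀ x y : S, d x y = d x⁻¹ y⁻¹)) ↔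
      ((∃ ρ : ↥(idempotents S) → ↥(idempotents S) → ℝ, IsCompatibleMetric ρ ∧
          ∀ (x y z : ↥(idempotents S))
            (hzx : (z : S) * (x : S) ∈ idempotents S)
            (hzy : (z : S) * (y : S) ∈ idempotents S),
              ρ ⟨(z : S) * (x : S), hzx⟩ ⟨(z : S) * (y : S), hzy⟩ ≤ ρ x y) ∧
        ∀ e ∈ A, FirstCountableTopology ↥(cliffordProj ⁻¹' {e}) ∧
          IsBalancedMaximalSubgroup S e) :=
  metrizable_subinvariant_iff_of_ditopological_clifford_uSemilattice_general S hS hdi A hAE hAc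
    hAdense
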